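/- There exist constants c ∈ (0,1), β > 0, C > 0 and N₀ ∈ ℕ such that for every even integer N ≥ N₀ and every integer n with 0 ≤ n ≤ c·N, the periodized discrete Hermite state satisfies ‖ψ_nᵈ − ψ̄_nᵈ‖ ≤ C·e^(−β·N). -/

import Mathlib

/-
Write `He_n` for the probabilists' Hermite polynomial. The three-term recurrence
`He_{n+2}(y) = y He_{n+1}(y) - (n+1) He_n(y)` gives `|He_n(y)| ≤ (2|y|)^n` as long as `n ≤ 2y²`.
Since `ψ_n(x)² = e^{-x²} He_n(√2 x)² / (n! √π)` and `(x²/2)^n / n! ≤ e^{x²/2}`, this yields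
`|ψ_n(x)| ≤ e^{-x²/8}` once `x² ≥ 16 n`. A grid point lies within half a period `T = √(2πN)` of
the origin, so its `k`-th translate (`k ≠ 0`) has `|x + kT| ≥ |k| T / 2` and contributes at most
`e^{-|k| πN/16}` when `n ≤ N/16`. Summing the two geometric tails bounds each component of
`ψ_nᵈ - ψ̄_nᵈ` by `4 e^{-πN/16}`, hence its norm by `4 √N e^{-πN/16} ≤ 32 e^{-N/16}`.
-/

open MeasureTheory Complex
open scoped BigOperators Matrix Kronecker

noncomputable section

/-- The `n`-th physicists' Hermite polynomial. -/
def hermiteH (n : ℕ) (x : ℝ) : ℝ :=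
  (-1 : ℝ) ^ n * Real.exp (x ^ 2) * iteratedDeriv n (fun y => Real.exp (-y ^ 2)) x

/-- The `n`-th Hermite function. -/
def hermiteFn (n : ℕ) (x : ℝ) : ℝ :=
  (1 / Real.sqrt (2 ^ n * n.factorial * Real.sqrt Real.pi)) * Real.exp (-x ^ 2 / 2) * hermiteH n x

/-- The grid points `x_j = j·√(2π/N)`, where `j = i - N/2` for `i : Fin N`. -/
def gridPt (N : ℕ) (i : Fin N) : ℝ :=
  (((i : ℤ) - (N : ℤ) / 2 : ℤ) : ℝ) * Real.sqrt (2 * Real.pi / N)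

/-- The discrete Hermite state `ψₙᵈ ∈ ℂ^N`. -/
def psid (N n : ℕ) : Fin N → ℂ :=
  fun i => (((2 * Real.pi / N) ^ ((1 : ℝ) / 4) * hermiteFn n (gridPt N i) : ℝ) : ℂ)

/-- The discrete position operator `xᵈ`. -/
def xd (N : ℕ) : Matrix (Fin N) (Fin N) ℂ :=
  Matrix.diagonal fun i => (gridPt N i : ℂ)

/-- The centered discrete Fourier transform `F_cᵈ`. -/
def Fcd (N : ℕ) : Matrix (Fin N) (Fin N) ℂ := fun j k =>
  ((1 / Real.sqrt N : ℝ) : ℂ) *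
    Complex.exp (2 * Real.pi * Complex.I *
      ((((j : ℤ) - (N : ℤ) / 2 : ℤ) : ℂ) * (((k : ℤ) - (N : ℤ) / 2 : ℤ) : ℂ)) / N)

/-- The discrete momentum operator `pᵈ = (F_cᵈ)⁻¹ xᵈ F_cᵈ`. -/
def pd (N : ℕ) : Matrix (Fin N) (Fin N) ℂ := (Fcd N)⁻¹ * xd N * Fcd N

/-- The standard inner product on `ℂ^ι`, antilinear in the first argument. -/
def einner {ι : Type*} [Fintype ι] (v w : ι → ℂ) : ℂ :=
  ∑ i, (starRingEnd ℂ) (v i) * w i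

/-- The Euclidean norm on `ℂ^ι`. -/
def euclNorm {ι : Type*} [Fintype ι] (v : ι → ℂ) : ℝ :=
  Real.sqrt (einner v v).re

/-- The periodization of the `n`-th Hermite function with period `T = √(2πN)`. -/
def hermiteFnPer (N n : ℕ) (x : ℝ) : ℝ :=
  ∑' k : ℤ, hermiteFn n (x + (k : ℝ) * Real.sqrt (2 * Real.pi * N))

/-- The periodized discrete Hermite state `ψ̄ₙᵈ ∈ ℂ^N`. -/
def psibar (N n : ℕ) : Fin N → ℂ :=
  fun i => (((2 * Real.pi / N) ^ ((1 : ℝ) / 4) * hermiteFnPer N n (gridPt N i) : ℝ) : ℂ)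

namespace Polynomial

theorem derivative_hermite_succ (n : ℕ) :
    derivative (hermite (n + 1)) = ((n + 1 : ℕ) : ℤ[X]) * hermite n := by
  induction n with
  | zero => simp
  | succ n ih =>
    rw [hermite_succ (n + 1), derivative_sub, derivative_mul, derivative_X, ih, derivative_mul,
      derivative_natCast, hermite_succ n]
    push_cast
    ring

theorem hermite_add_two (n : ℕ) :
    hermite (n + 2) = X * hermite (n + 1) - ((n + 1 : ℕ) : ℤ[X]) * hermite n := by
  rw [hermite_succ (n + 1), derivative_hermite_succ]

theorem abs_aeval_hermite_le {y : ℝ} {n : ℕ} (hn : (n : ℝ) ≤ 2 * y ^ 2) :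
    |aeval y (hermite n)| ≤ (2 * |y|) ^ n := by
  induction n using Nat.twoStepInduction with
  | zero => simp
  | one => simpa using le_mul_of_one_le_left (abs_nonneg y) one_le_two
  | more n ih₀ ih₁ =>
    push_cast at hn ih₀ ih₁
    rw [hermite_add_two, map_sub, map_mul, map_mul, aeval_X, map_natCast]
    calc |y * aeval y (hermite (n + 1)) - ((n + 1 : ℕ) : ℝ) * aeval y (hermite n)|
        ≤ |y| * (2 * |y|) ^ (n + 1) + (n + 1) * (2 * |y|) ^ n := by
          refine (abs_sub _ _).trans (add_le_add ?_ ?_)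
          · rw [abs_mul]; exact mul_le_mul_of_nonneg_left (ih₁ (by linarith)) (abs_nonneg y)
          · rw [abs_mul, Nat.abs_cast]; push_cast
            exact mul_le_mul_of_nonneg_left (ih₀ (by linarith)) (by positivity)
      _ = (2 * y ^ 2 + (n + 1)) * (2 * |y|) ^ n := by rw [pow_succ, ← sq_abs y]; ring
      _ ≤ (4 * y ^ 2) * (2 * |y|) ^ n := by gcongr; linarith
      _ = (2 * |y|) ^ (n + 2) := by rw [pow_add, ← sq_abs y]; ring

end Polynomial

open Polynomial Real
open scoped Nat

theorem hermiteH_eq_aeval_hermite (n : ℕ) (x : ℝ) :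
    hermiteH n x = √2 ^ n * aeval (√2 * x) (hermite n) := by
  have hsq : ∀ y : ℝ, (√2 * y) ^ 2 / 2 = y ^ 2 := fun y => by
    rw [mul_pow, Real.sq_sqrt zero_le_two]; ring
  have hgauss : (fun y : ℝ => Real.exp (-y ^ 2)) = fun y => Real.exp (-((√2 * y) ^ 2 / 2)) := by
    simp only [hsq]
  have hsmooth : ContDiff ℝ n fun y : ℝ => Real.exp (-(y ^ 2 / 2)) := by fun_prop
  rw [hermiteH, hgauss, iteratedDeriv_comp_const_mul hsmooth, iteratedDeriv_eq_iterate]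
  beta_reduce
  rw [deriv_gaussian_eq_hermite_mul_gaussian, hsq, Real.exp_neg]
  have : Real.exp (x ^ 2) ≠ 0 := (Real.exp_pos _).ne'
  field_simp
  rw [← pow_mul, mul_comm n 2, pow_mul]
  simp

theorem hermiteFn_sq (n : ℕ) (x : ℝ) :
    hermiteFn n x ^ 2 = Real.exp (-x ^ 2) * aeval (√2 * x) (hermite n) ^ 2 / (n ! * √π) := by
  have hexp : Real.exp (-x ^ 2 / 2) ^ 2 = Real.exp (-x ^ 2) := by
    rw [← Real.exp_nat_mul]; ring_nf
  rw [hermiteFn, hermiteH_eq_aeval_hermite, mul_pow, mul_pow, mul_pow, div_pow, hexp,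
    Real.sq_sqrt (by positivity), ← pow_mul, mul_comm n 2, pow_mul, Real.sq_sqrt zero_le_two]
  field_simp

theorem abs_hermiteFn_le {n : ℕ} {x : ℝ} (hx : 16 * n ≤ x ^ 2) :
    |hermiteFn n x| ≤ Real.exp (-x ^ 2 / 8) := by
  have hHe : aeval (√2 * x) (hermite n) ^ 2 ≤ 16 ^ n * (x ^ 2 / 2) ^ n := by
    have h := abs_aeval_hermite_le (y := √2 * x) (n := n) (by
      rw [mul_pow, Real.sq_sqrt zero_le_two]; linarith)
    calc aeval (√2 * x) (hermite n) ^ 2 ≤ ((2 * |√2 * x|) ^ n) ^ 2 := by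
          rw [← sq_abs]; gcongr
      _ = 16 ^ n * (x ^ 2 / 2) ^ n := by
          rw [← pow_mul, mul_comm n 2, pow_mul, ← mul_pow]
          congr 1
          rw [mul_pow, sq_abs, mul_pow, Real.sq_sqrt zero_le_two]
          ring
  have h16 : (16 : ℝ) ^ n ≤ Real.exp (4 * n) := by
    calc (16 : ℝ) ^ n = (2 ^ 4) ^ n := by norm_num
      _ ≤ (Real.exp 1 ^ 4) ^ n := by
          gcongr; linarith [Real.add_one_le_exp 1]
      _ = Real.exp (4 * n) := by rw [← Real.exp_nat_mul, ← Real.exp_nat_mul]; ring_nf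
  have hsq : hermiteFn n x ^ 2 ≤ Real.exp (-x ^ 2 / 8) ^ 2 := by
    calc hermiteFn n x ^ 2 ≤ Real.exp (-x ^ 2) * aeval (√2 * x) (hermite n) ^ 2 / n ! := by
          rw [hermiteFn_sq]
          gcongr
          exact le_mul_of_one_le_right (by positivity)
            (Real.one_le_sqrt.mpr (by linarith [pi_gt_three]))
      _ ≤ Real.exp (-x ^ 2) * (16 ^ n * ((x ^ 2 / 2) ^ n / n !)) := by
          rw [mul_div_assoc, ← mul_div_assoc (16 ^ n)]
          gcongr
      _ ≤ Real.exp (-x ^ 2) * (Real.exp (4 * n) * Real.exp (x ^ 2 / 2)) := by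
          gcongr; exact Real.pow_div_factorial_le_exp (x := x ^ 2 / 2) (by positivity) n
      _ ≤ Real.exp (-x ^ 2 / 8) ^ 2 := by
          rw [← Real.exp_add, ← Real.exp_add, ← Real.exp_nat_mul]
          gcongr
          push_cast
          linarith
  exact (sq_le_sq₀ (abs_nonneg _) (Real.exp_pos _).le).mp (by rwa [sq_abs])

theorem abs_tsum_int_sub_apply_zero_le {f : ℤ → ℝ} {r : ℝ} (hr₀ : 0 ≤ r) (hr₁ : r < 1)
    (hf : ∀ k ≠ 0, |f k| ≤ r ^ k.natAbs) :
    |∑' k, f k - f 0| ≤ 2 * r / (1 - r) := by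
  have hgeom : HasSum (fun n : ℕ => r ^ (n + 1)) (r / (1 - r)) := by
    simpa only [pow_succ', div_eq_mul_inv] using (hasSum_geometric_of_lt_one hr₀ hr₁).mul_left r
  have half : ∀ g : ℕ → ℝ, (∀ n, ‖g n‖ ≤ r ^ (n + 1)) →
      Summable g ∧ ‖∑' n, g n‖ ≤ r / (1 - r) := fun g hg =>
    ⟨hgeom.summable.of_norm_bounded hg, tsum_of_norm_bounded hgeom hg⟩
  obtain ⟨hpos, hpos_le⟩ := half (fun n => f (n + 1)) fun n => by
    have := hf (n + 1) (by omega)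
    rwa [show ((n : ℤ) + 1).natAbs = n + 1 by omega] at this
  obtain ⟨hneg, hneg_le⟩ := half (fun n => f (-(n + 1))) fun n => by
    have := hf (-(n + 1)) (by omega)
    rwa [show (-((n : ℤ) + 1)).natAbs = n + 1 by omega] at this
  rw [tsum_of_add_one_of_neg_add_one hpos hneg, add_sub_right_comm, add_sub_cancel_right,
    ← Real.norm_eq_abs]
  calc _ ≤ r / (1 - r) + r / (1 - r) := (norm_add_le _ _).trans (add_le_add hpos_le hneg_le)
    _ = 2 * r / (1 - r) := by ring

theorem natAbs_mul_sq_div_four_le_sq_add_mul {x T : ℝ} {k : ℤ} (hk : k ≠ 0) (hx : |x| ≤ T / 2) :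
    k.natAbs * T ^ 2 / 4 ≤ (x + k * T) ^ 2 := by
  have hk1 : (1 : ℝ) ≤ |(k : ℝ)| := by exact_mod_cast Int.one_le_abs hk
  have hT : 0 ≤ T := by linarith [abs_nonneg x]
  have hdist : |(k : ℝ)| * T / 2 ≤ |x + k * T| := by
    have := abs_sub (x + k * T) x
    rw [add_sub_cancel_left, abs_mul, abs_of_nonneg hT] at this
    nlinarith
  have hsq : (|(k : ℝ)| * T / 2) ^ 2 ≤ (x + k * T) ^ 2 := by
    rw [← sq_abs (x + k * T)]; gcongr
  rw [Nat.cast_natAbs, Int.cast_abs]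
  nlinarith [mul_le_mul_of_nonneg_right hk1 (sq_nonneg T)]

theorem abs_hermiteFn_sub_tsum_translate_le {n : ℕ} {T x : ℝ} (hT : 0 < T)
    (hn : 64 * n ≤ T ^ 2) (hx : |x| ≤ T / 2) :
    |hermiteFn n x - ∑' k : ℤ, hermiteFn n (x + k * T)| ≤
      2 * Real.exp (-T ^ 2 / 32) / (1 - Real.exp (-T ^ 2 / 32)) := by
  have hr₁ : Real.exp (-T ^ 2 / 32) < 1 := Real.exp_lt_one_iff.mpr (by
    have := pow_pos hT 2; linarith)
  rw [abs_sub_comm]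
  convert abs_tsum_int_sub_apply_zero_le (Real.exp_pos _).le hr₁ fun k hk => ?_ using 3
  · simp
  have hkT := natAbs_mul_sq_div_four_le_sq_add_mul hk hx
  have hk1 : (1 : ℝ) ≤ k.natAbs := by exact_mod_cast Int.natAbs_pos.mpr hk
  calc |hermiteFn n (x + k * T)| ≤ Real.exp (-(x + k * T) ^ 2 / 8) :=
        abs_hermiteFn_le (by nlinarith)
    _ ≤ Real.exp (k.natAbs * (-T ^ 2 / 32)) := by gcongr; linarith
    _ = Real.exp (-T ^ 2 / 32) ^ k.natAbs := Real.exp_nat_mul _ _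

theorem abs_gridPt_le {N : ℕ} (i : Fin N) : |gridPt N i| ≤ √(2 * π * N) / 2 := by
  have hN : (0 : ℝ) < N := by exact_mod_cast i.pos
  have hj : |(((i : ℤ) - (N : ℤ) / 2 : ℤ) : ℝ)| ≤ N / 2 := by
    rw [← Int.cast_abs, le_div_iff₀ two_pos]
    have := i.isLt
    have : |(i : ℤ) - (N : ℤ) / 2| * 2 ≤ N := by
      rcases abs_cases ((i : ℤ) - (N : ℤ) / 2) with ⟨h, _⟩ | ⟨h, _⟩ <;> omega
    exact_mod_cast this
  have hscale : (N / 2 : ℝ) * √(2 * π / N) = √(2 * π * N) / 2 := by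
    rw [show 2 * π * N = 2 * π / N * N ^ 2 by field_simp, Real.sqrt_mul (by positivity),
      Real.sqrt_sq hN.le]
    ring
  rw [gridPt, abs_mul, abs_of_nonneg (Real.sqrt_nonneg _), ← hscale]
  gcongr

theorem einner_self_re {ι : Type*} [Fintype ι] (v : ι → ℂ) :
    (einner v v).re = ∑ i, ‖v i‖ ^ 2 := by
  simp only [einner, Complex.conj_mul', Complex.re_sum, ← Complex.ofReal_pow, Complex.ofReal_re]

theorem euclNorm_le_of_norm_le {ι : Type*} [Fintype ι] {v : ι → ℂ} {B : ℝ} (hB : 0 ≤ B)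
    (hv : ∀ i, ‖v i‖ ≤ B) : euclNorm v ≤ √(Fintype.card ι) * B := by
  rw [euclNorm, einner_self_re, ← Real.sqrt_sq hB, ← Real.sqrt_mul (Nat.cast_nonneg _)]
  gcongr
  calc ∑ i, ‖v i‖ ^ 2 ≤ ∑ _i : ι, B ^ 2 := by gcongr with i; exact hv i
    _ = _ := by rw [Finset.sum_const, Finset.card_univ, nsmul_eq_mul]

theorem norm_psid_sub_psibar_apply_le {N n : ℕ} (hN : 16 ≤ N) (hn : 16 * n ≤ N) (i : Fin N) :
    ‖(psid N n - psibar N n) i‖ ≤ 4 * Real.exp (-(π * N) / 16) := by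
  have hN' : (16 : ℝ) ≤ N := by exact_mod_cast hN
  have hT : √(2 * π * N) ^ 2 = 2 * π * N := Real.sq_sqrt (by positivity)
  have hnT : 64 * (n : ℝ) ≤ √(2 * π * N) ^ 2 := by
    have : (16 * n : ℝ) ≤ N := by exact_mod_cast hn
    rw [hT]; nlinarith [pi_gt_three]
  have hclose := abs_hermiteFn_sub_tsum_translate_le (Real.sqrt_pos.mpr (by positivity)) hnT
    (abs_gridPt_le i)
  rw [hT, show -(2 * π * N) / 32 = -(π * N) / 16 by ring] at hclose
  set r := Real.exp (-(π * N) / 16)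
  have hr : r ≤ 1 / 2 := (Real.exp_le_exp.mpr (by nlinarith [pi_gt_three])).trans
    Real.exp_neg_one_lt_half.le
  have hweight : (2 * π / N) ^ (1 / 4 : ℝ) ≤ 1 :=
    Real.rpow_le_one (by positivity) ((div_le_one (by positivity)).mpr (by linarith [pi_lt_four]))
      (by norm_num)
  simp only [Pi.sub_apply, psid, psibar, ← Complex.ofReal_sub, Complex.norm_real, Real.norm_eq_abs,
    ← mul_sub, abs_mul, abs_of_nonneg (by positivity : (0 : ℝ) ≤ (2 * π / N) ^ (1 / 4 : ℝ))]
  calc _ ≤ 1 * (2 * r / (1 - r)) := by gcongr; exact hclose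
    _ ≤ 4 * r := by
      rw [one_mul, div_le_iff₀ (by linarith)]
      nlinarith [Real.exp_pos (-(π * N) / 16)]

/-- The periodized discrete Hermite state is exponentially close to the discrete Hermite
state: `‖ψₙᵈ - ψ̄ₙᵈ‖ ≤ C e^{-βN}` for `n ≤ c·N`. -/
theorem periodized_discrete_hermite_close :
    ∃ c β C : ℝ, ∃ N₀ : ℕ, 0 < c ∧ c < 1 ∧ 0 < β ∧ 0 < C ∧
      ∀ N : ℕ, N₀ ≤ N → Even N → ∀ n : ℕ, (n : ℝ) ≤ c * N →
        euclNorm (psid N n - psibar N n) ≤ C * Real.exp (-β * N) := by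
  refine ⟨1 / 16, 1 / 16, 32, 16, by norm_num, by norm_num, by norm_num, by norm_num, ?_⟩
  intro N hN _ n hn
  have hsqrt : √N ≤ 8 * Real.exp (N / 8) := by
    have := Real.add_one_le_exp (N / 8)
    have : √N ≤ 1 + N := Real.sqrt_le_iff.mpr ⟨by positivity, by nlinarith⟩
    linarith
  have hdecay : Real.exp (-(π * N) / 16) ≤ Real.exp (-(3 * N) / 16) := by
    gcongr; nlinarith [pi_gt_three]
  calc euclNorm (psid N n - psibar N n) ≤ √N * (4 * Real.exp (-(π * N) / 16)) := by
        simpa using euclNorm_le_of_norm_le (by positivity)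
          (norm_psid_sub_psibar_apply_le hN (by exact_mod_cast (by linarith : (16 * n : ℝ) ≤ N)))
    _ ≤ 8 * Real.exp (N / 8) * (4 * Real.exp (-(3 * N) / 16)) := by gcongr
    _ = 32 * Real.exp (-(1 / 16) * N) := by
        rw [mul_mul_mul_comm, ← Real.exp_add]; ring_nf

end
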